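/- arXiv:math/0204229 — 5 statements merged into one kernel-verified Lean document; each statement's English description precedes it below -/
import Mathlib

section
/- Let V be a finite-dimensional complex vector space, let N ∈ S(V,V*) have rank exactly k, and let M ∈ S(V,V*) be such that N + tM has rank at most k for every t ∈ ℂ. Then M maps the kernel of N into the image of N. -/
/-!
Suppose `v ∈ ker N` but `M v ∉ range N`. If `N x₁, …, N xₖ` is a basis of `range N`, the `k + 1`
functionals `N xᵢ, M v` are linearly independent. Linear independence of a family of functionals
is detected by a nonvanishing determinant `det (fᵢ (eⱼ))`, which for the perturbed family
`(N + t M) xᵢ, M v` is a polynomial in `t`; so it persists for some `t ≠ 0`. But for `t ≠ 0` all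
these functionals lie in `range (N + t M)`, as `(N + t M) (t⁻¹ v) = M v`, so that range has
dimension at least `k + 1`.
-/

open Module Polynomial

section

variable {K V ι : Type*} [Field K] [AddCommGroup V] [Module K V]

theorem LinearIndependent.of_det_apply_ne_zero [Fintype ι] [DecidableEq ι] {f : ι → Dual K V}
    (e : ι → V) (h : (Matrix.of fun i j => f i (e j)).det ≠ 0) : LinearIndependent K f :=
  .of_comp (LinearMap.pi fun j => LinearMap.applyₗ (e j))
    (Matrix.linearIndependent_rows_of_det_ne_zero h)

theorem LinearIndependent.exists_biorthogonal [Finite ι] [DecidableEq ι] {f : ι → Dual K V}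
    (hf : LinearIndependent K f) : ∃ e : ι → V, Matrix.of (fun i j => f i (e j)) = 1 := by
  have hspan : Submodule.span K (Set.range (flip fun i v => f i v)) = ⊤ :=
    span_flip_eq_top_iff_linearIndependent.2
      (hf.map' (LinearMap.ltoFun K V K K) (LinearMap.ker_eq_bot.2 DFunLike.coe_injective))
  have hrange : LinearMap.range (LinearMap.pi fun i => f i) = ⊤ := by
    rw [← Submodule.span_eq (LinearMap.range _), LinearMap.coe_range]
    exact hspan
  choose e he using fun j => LinearMap.range_eq_top.1 hrange (Pi.single j 1)
  refine ⟨e, Matrix.ext fun i j => ?_⟩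
  simpa [Matrix.one_apply, Pi.single_apply] using congrFun (he j) i

theorem Matrix.exists_ne_zero_det_add_smul_ne_zero [Infinite K] [Fintype ι] [DecidableEq ι]
    (A B : Matrix ι ι K) (hA : A.det ≠ 0) : ∃ t : K, t ≠ 0 ∧ (A + t • B).det ≠ 0 := by
  set p : K[X] := (A.map C + (X : K[X]) • B.map C).det
  have heval : ∀ t, p.eval t = (A + t • B).det := fun t => by
    rw [← coe_evalRingHom, RingHom.map_det]
    congr 1
    ext i j
    simp [smul_eq_mul, mul_comm t]
  have hp : X * p ≠ 0 := mul_ne_zero X_ne_zero fun h => hA (by simpa [h] using (heval 0).symm)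
  by_contra! hall
  exact hp (Polynomial.funext fun t => by by_cases ht : t = 0 <;> simp [ht, heval, hall])

theorem LinearIndependent.exists_ne_zero_add_smul [Infinite K] [Finite ι] {f : ι → Dual K V}
    (hf : LinearIndependent K f) (g : ι → Dual K V) :
    ∃ t : K, t ≠ 0 ∧ LinearIndependent K (f + t • g) := by
  classical
  have := Fintype.ofFinite ι
  obtain ⟨e, he⟩ := hf.exists_biorthogonal
  obtain ⟨t, ht0, ht⟩ :=
    Matrix.exists_ne_zero_det_add_smul_ne_zero 1 (Matrix.of fun i j => g i (e j)) (by simp)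
  refine ⟨t, ht0, .of_det_apply_ne_zero e ?_⟩
  rw [← he] at ht
  convert ht using 2
  ext i j
  simp

theorem LinearIndependent.card_le_finrank_of_forall_mem {W : Type*} [AddCommGroup W]
    [Module K W] [FiniteDimensional K W] [Fintype ι] {f : ι → W} (hf : LinearIndependent K f)
    {S : Submodule K W} (hS : ∀ i, f i ∈ S) : Fintype.card ι ≤ finrank K S :=
  finrank_span_eq_card hf ▸
    Submodule.finrank_mono (Submodule.span_le.2 (Set.range_subset_iff.2 hS))

end

theorem oort_keel_sadun_lem_4_1_general {V : Type*} [AddCommGroup V] [Module ℂ V]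
    [FiniteDimensional ℂ V] (k : ℕ) (N M : V →ₗ[ℂ] Module.Dual ℂ V)
    (hNrank : Module.finrank ℂ (LinearMap.range N) = k)
    (h : ∀ t : ℂ, Module.finrank ℂ (LinearMap.range (N + t • M)) ≤ k) :
    ∀ v ∈ LinearMap.ker N, M v ∈ LinearMap.range N := by
  intro v hv
  by_contra hMv
  let b : Basis (Fin k) ℂ (LinearMap.range N) := finBasisOfFinrankEq ℂ _ hNrank
  choose x hx using fun i => (b i).2
  have hNx : LinearIndependent ℂ (N ∘ x) := by
    simpa [Function.comp_def, hx] using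
      b.linearIndependent.map' _ (LinearMap.range N).ker_subtype
  have hspan : Submodule.span ℂ (Set.range (N ∘ x)) ≤ LinearMap.range N :=
    Submodule.span_le.2 (Set.range_subset_iff.2 fun i => LinearMap.mem_range_self N (x i))
  set f : Option (Fin k) → Dual ℂ V := fun o => Option.casesOn' o (M v) (N ∘ x)
  set g : Option (Fin k) → Dual ℂ V := fun o => Option.casesOn' o 0 (M ∘ x)
  obtain ⟨t, ht0, ht⟩ := (hNx.option fun hMv' => hMv (hspan hMv')).exists_ne_zero_add_smul g
  have hmem : ∀ o, (f + t • g) o ∈ LinearMap.range (N + t • M) := by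
    rintro (_ | i)
    · exact ⟨t⁻¹ • v, by simp [f, g, LinearMap.mem_ker.1 hv, ht0]⟩
    · exact ⟨x i, by simp [f, g]⟩
  have hcard := ht.card_le_finrank_of_forall_mem hmem
  rw [Fintype.card_option, Fintype.card_fin] at hcard
  exact absurd (h t) (by omega)

/-- **Lemma 4.1 (variant).** Let `V` be a finite-dimensional complex vector space.
If `N ∈ S(V,V*)` has rank exactly `k`, and `M ∈ S(V,V*)` is such that `N + t • M` has rank
at most `k` for every `t ∈ ℂ`, then `M` maps the kernel of `N` into the image of `N`. -/
theorem oort_keel_sadun_lem_4_1 {V : Type*} [AddCommGroup V] [Module ℂ V]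
    [FiniteDimensional ℂ V] (k : ℕ) (N M : V →ₗ[ℂ] Module.Dual ℂ V)
    (hNsym : ∀ x y : V, N x y = N y x) (hMsym : ∀ x y : V, M x y = M y x)
    (hNrank : Module.finrank ℂ (LinearMap.range N) = k)
    (h : ∀ t : ℂ, Module.finrank ℂ (LinearMap.range (N + t • M)) ≤ k) :
    ∀ v ∈ LinearMap.ker N, M v ∈ LinearMap.range N :=
  oort_keel_sadun_lem_4_1_general k N M hNrank h
end

section
/- Let V be a finite-dimensional complex vector space and let Y ⊆ S(V,V*) be a linear subspace all of whose elements have rank at most 2. Suppose M ∈ Y and v ∈ V satisfy M(v)(v) ≠ 0. Then every element of v^⊥ ∩ Y = {N ∈ Y : N(v) = 0} has rank at most 1, and the dimension of v^⊥ ∩ Y is at most 1. -/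
/-!
Write `d(t)` for the determinant of the `3 × 3` matrix `((M + t N)(aᵢ)(bⱼ))` with rows
`a = (v, x, y)` and columns `b = (v, x, z)`. It vanishes for every `t`, since `M + t N` has rank
at most `2`. When `N(v) = 0` and `N` is symmetric, the first row and column of `N` vanish, so the
`t²`-coefficient of `d` is `M(v)(v)` times the minor `N(x)(x) N(y)(z) - N(y)(x) N(x)(z)`.
Hence all these minors of `N ∈ v^⊥ ∩ Y` vanish, which forces `N(y) = (N(y)(x) / N(x)(x)) • N(x)`
as soon as `N(x)(x) ≠ 0`; and two such forms whose sum is again such a form are proportional.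
-/

/-- For `v ∈ V`, the subspace `v^⊥ ⊆ Hom(V, V*)` of maps `N` with `N(v) = 0`. -/
noncomputable def evalPerp {V : Type*} [AddCommGroup V] [Module ℂ V] (v : V) :
    Submodule ℂ (V →ₗ[ℂ] Module.Dual ℂ V) where
  carrier := {N | N v = 0}
  add_mem' := fun {a b} ha hb => by
    simp only [Set.mem_setOf_eq, LinearMap.add_apply] at *
    rw [ha, hb, add_zero]
  zero_mem' := rfl
  smul_mem' := fun c a ha => by
    simp only [Set.mem_setOf_eq, LinearMap.smul_apply] at *
    rw [ha, smul_zero]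

open Module LinearMap
open LinearMap (BilinForm)

namespace LinearMap.BilinForm

variable {K V : Type*} [Field K] [AddCommGroup V] [Module K V]

theorem det_eq_zero_of_finrank_range_lt [FiniteDimensional K V] {ι : Type*} [Fintype ι]
    [DecidableEq ι] (P : BilinForm K V) (hrank : finrank K (range P) < Fintype.card ι)
    (a b : ι → V) : (Matrix.of fun i j => P (a i) (b j)).det = 0 := by
  have hdep : ¬ LinearIndependent K (fun i => P (a i)) := by
    intro hind
    have hspan : Submodule.span K (Set.range fun i => P (a i)) ≤ range P :=
      Submodule.span_le.2 (Set.range_subset_iff.2 fun i => mem_range_self P (a i))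
    have hcard := linearIndependent_iff_card_eq_finrank_span.1 hind
    rw [Set.finrank] at hcard
    have := Submodule.finrank_mono hspan
    omega
  obtain ⟨g, hg, i, hgi⟩ := Fintype.not_linearIndependent_iff.1 hdep
  refine Matrix.exists_vecMul_eq_zero_iff.1 ⟨g, Function.ne_iff.2 ⟨i, hgi⟩, funext fun j => ?_⟩
  simpa [Matrix.vecMul, dotProduct] using congr($hg (b j))

theorem minor_eq_of_finrank_range_add_smul_le_two [FiniteDimensional K V] [NeZero (2 : K)]
    {M N : BilinForm K V} {v : V} (hrank : ∀ t : K, finrank K (range (M + t • N)) ≤ 2)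
    (hNv : N v = 0) (hNv' : N.flip v = 0) (hMv : M v v ≠ 0) (x y z : V) :
    N x x * N y z = N y x * N x z := by
  have hdet (t : K) := det_eq_zero_of_finrank_range_lt (M + t • N)
    (by simpa using (hrank t).trans_lt (by norm_num : 2 < 3)) ![v, x, y] ![v, x, z]
  have hNva (a : V) : N v a = 0 := congr($hNv a)
  have hNav (a : V) : N a v = 0 := congr($hNv' a)
  have h₀ := hdet 0
  have h₁ := hdet 1
  have h₂ := hdet (-1)
  simp only [Matrix.det_fin_three, Matrix.of_apply, Matrix.cons_val, add_apply, smul_apply,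
    smul_eq_mul, hNva, hNav] at h₀ h₁ h₂
  have h : 2 * M v v * (N x x * N y z - N y x * N x z) = 0 := by
    linear_combination h₁ + h₂ - 2 * h₀
  simpa [sub_eq_zero, hMv, two_ne_zero] using h

section Minors

variable {N : BilinForm K V} (hsym : ∀ x y, N x y = N y x)
  (hminor : ∀ x y z, N x x * N y z = N y x * N x z)
include hsym hminor

theorem apply_eq_zero_of_minor_eq {x : V} (hx : N x x = 0) : N x = 0 := by
  ext y
  have h := hminor x y y
  rw [hx, zero_mul, hsym y x] at h
  simpa using mul_self_eq_zero.1 h.symm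

theorem eq_zero_of_minor_eq (hdiag : ∀ x, N x x = 0) : N = 0 :=
  LinearMap.ext fun x => apply_eq_zero_of_minor_eq hsym hminor (hdiag x)

end Minors

theorem apply_eq_smul_of_minor_eq {N : BilinForm K V}
    (hminor : ∀ x y z, N x x * N y z = N y x * N x z) {x : V} (hx : N x x ≠ 0) (y : V) :
    N y = (N y x / N x x) • N x := by
  ext z
  rw [smul_apply, smul_eq_mul, div_mul_eq_mul_div, eq_div_iff hx, ← hminor]
  ring

theorem finrank_range_le_one_of_minor_eq {N : BilinForm K V} (hsym : ∀ x y, N x y = N y x)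
    (hminor : ∀ x y z, N x x * N y z = N y x * N x z) : finrank K (range N) ≤ 1 := by
  by_cases hdiag : ∀ x, N x x = 0
  · rw [eq_zero_of_minor_eq hsym hminor hdiag, range_zero, finrank_bot]
    exact zero_le_one
  push Not at hdiag
  obtain ⟨x, hx⟩ := hdiag
  refine finrank_le_one ⟨N x, mem_range_self N x⟩ ?_
  rintro ⟨_, y, rfl⟩
  exact ⟨N y x / N x x, Subtype.ext (apply_eq_smul_of_minor_eq hminor hx y).symm⟩

theorem eq_zero_of_minor_eq_of_add {N₀ N : BilinForm K V} (hsym : ∀ x y, N x y = N y x)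
    (hminor : ∀ x y z, N x x * N y z = N y x * N x z)
    (hminor₀ : ∀ x y z, N₀ x x * N₀ y z = N₀ y x * N₀ x z)
    (hminor_add : ∀ x y z, (N₀ + N) x x * (N₀ + N) y z = (N₀ + N) y x * (N₀ + N) x z)
    {x : V} (hx₀ : N₀ x x ≠ 0) (hx : N x x = 0) : N = 0 := by
  have hNx (a : V) : N x a = 0 := congr($(apply_eq_zero_of_minor_eq hsym hminor hx) a)
  ext y z
  have h := hminor_add x y z
  simp only [add_apply, hNx, hsym y x, add_zero] at h
  have h' : N₀ x x * N y z = 0 := by linear_combination h - hminor₀ x y z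
  simpa [hx₀] using h'

theorem finrank_le_one_of_forall_minor_eq (S : Submodule K (BilinForm K V))
    (hsym : ∀ N ∈ S, ∀ x y, N x y = N y x)
    (hminor : ∀ N ∈ S, ∀ x y z, N x x * N y z = N y x * N x z) : finrank K S ≤ 1 := by
  by_cases hdiag : ∀ N ∈ S, ∀ x, N x x = 0
  · refine finrank_le_one 0 fun ⟨N, hN⟩ => ⟨0, Subtype.ext ?_⟩
    simp [eq_zero_of_minor_eq (hsym N hN) (hminor N hN) (hdiag N hN)]
  push Not at hdiag
  obtain ⟨N₀, hN₀, x, hx₀⟩ := hdiag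
  refine finrank_le_one ⟨N₀, hN₀⟩ fun ⟨N, hN⟩ => ⟨N x x / N₀ x x, Subtype.ext ?_⟩
  have hmem : N + (-(N x x / N₀ x x)) • N₀ ∈ S := S.add_mem hN (S.smul_mem _ hN₀)
  have hsum : N₀ + (N + (-(N x x / N₀ x x)) • N₀) ∈ S := S.add_mem hN₀ hmem
  have h := eq_zero_of_minor_eq_of_add (hsym _ hmem) (hminor _ hmem) (hminor _ hN₀)
    (hminor _ hsum) hx₀ (by simp [hx₀])
  show _ • N₀ = N
  ext y z
  have hyz := congr($h y z)
  simp only [add_apply, smul_apply, smul_eq_mul, zero_apply] at hyz ⊢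
  linear_combination -hyz

end LinearMap.BilinForm

/-- **Lemma 4.3.** Let `V` be a finite-dimensional complex vector space and `Y ⊆ S(V,V*)`
a linear subspace all of whose elements have rank at most 2. Suppose `M ∈ Y` and `v ∈ V`
satisfy `M(v)(v) ≠ 0`. Then every element of `v^⊥ ∩ Y` has rank at most 1, and
`v^⊥ ∩ Y` has dimension at most 1. -/
theorem oort_keel_sadun_lem_4_3 {V : Type*} [AddCommGroup V] [Module ℂ V]
    [FiniteDimensional ℂ V]
    (Y : Submodule ℂ (V →ₗ[ℂ] Module.Dual ℂ V))
    (hYsym : ∀ M ∈ Y, ∀ x y : V, M x y = M y x)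
    (hYrank : ∀ M ∈ Y, Module.finrank ℂ (LinearMap.range M) ≤ 2)
    (M : V →ₗ[ℂ] Module.Dual ℂ V) (hMY : M ∈ Y) (v : V) (hMv : M v v ≠ 0) :
    (∀ N ∈ evalPerp v ⊓ Y, Module.finrank ℂ (LinearMap.range N) ≤ 1) ∧
      Module.finrank ℂ ↥(evalPerp v ⊓ Y) ≤ 1 := by
  have hsym : ∀ N ∈ evalPerp v ⊓ Y, ∀ x y, N x y = N y x := fun N hN => hYsym N hN.2
  have hminor : ∀ N ∈ evalPerp v ⊓ Y, ∀ x y z, N x x * N y z = N y x * N x z := by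
    intro N ⟨hNv, hNY⟩
    replace hNv : N v = 0 := hNv
    have hNv' : N.flip v = 0 := LinearMap.ext fun a => by rw [flip_apply, hYsym N hNY, hNv]
    exact BilinForm.minor_eq_of_finrank_range_add_smul_le_two
      (fun t => hYrank _ (Y.add_mem hMY (Y.smul_mem t hNY))) hNv hNv' hMv
  exact ⟨fun N hN => BilinForm.finrank_range_le_one_of_minor_eq (hsym N hN) (hminor N hN),
    BilinForm.finrank_le_one_of_forall_minor_eq _ hsym hminor⟩
end

section
/- Let V be a finite-dimensional complex vector space and let i ∈ {1, 2}. There is no i-dimensional linear subspace Y ⊆ S(V,V*) such that for every nonzero v ∈ V the evaluation map e_v : Y → V* fails to be injective. -/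
/-!
For a basis `A, B` of `Y`, non-injectivity of `e_v` on `Y` says exactly that the functionals
`A v, B v` are linearly dependent, i.e. that all minors `A v x * B v y - B v x * A v y` vanish.
Polarizing this in `v` and evaluating at a vector `u` with `A u u ≠ 0` (which exists because
`A` is a nonzero symmetric form and `2` is invertible) forces `B = (B u u / A u u) • A`,
contradicting independence. In dimension one the same translation gives `A v = 0` for all `v`.
-/

open Module

theorem Module.Basis.injective_iff_linearIndependent_comp {ι R M M' : Type*} [CommSemiring R]
    [AddCommMonoid M] [Module R M] [AddCommMonoid M'] [Module R M'] (b : Basis ι R M)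
    (f : M →ₗ[R] M') : Function.Injective f ↔ LinearIndependent R (f ∘ b) :=
  ⟨fun hf => b.linearIndependent.map_injOn f hf.injOn,
    fun h => b.constr_self R f ▸ b.injective_constr_of_linearIndependent h⟩

section

variable {K V : Type*} [Field K] [AddCommGroup V] [Module K V]

theorem LinearMap.mul_apply_comm_of_not_linearIndependent {f g : V →ₗ[K] K}
    (h : ¬LinearIndependent K ![f, g]) (x y : V) : f x * g y = g x * f y := by
  rw [LinearIndependent.pair_iff] at h
  push Not at h
  obtain ⟨s, t, hst, hne⟩ := h
  have hx : s * f x + t * g x = 0 := by simpa using congrArg (· x) hst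
  have hy : s * f y + t * g y = 0 := by simpa using congrArg (· y) hst
  by_cases hs : s = 0
  · refine mul_left_cancel₀ (hne hs) ?_
    linear_combination f x * hy - f y * hx
  · refine mul_left_cancel₀ hs ?_
    linear_combination g y * hx - g x * hy

namespace LinearMap.BilinForm

theorem exists_eq_smul_of_mul_apply_comm {A B : LinearMap.BilinForm K V} (hA : A.IsSymm)
    (hB : B.IsSymm) (h : ∀ v x y, A v x * B v y = B v x * A v y) {u : V} (hu : A u u ≠ 0) :
    ∃ c : K, B = c • A := by
  obtain ⟨c, hcu⟩ : ∃ c, c * A u u = B u u := ⟨_, div_mul_cancel₀ _ hu⟩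
  have hBu : ∀ x, B u x = c * A u x := fun x => by
    refine mul_right_cancel₀ hu ?_
    linear_combination -h u x u - A u x * hcu
  have hBvu : ∀ v, B v u = c * A v u := fun v => by rw [hB.eq, hBu, hA.eq]
  refine ⟨c, LinearMap.ext₂ fun v y => mul_left_cancel₀ hu ?_⟩
  -- the vanishing minors polarized in `v`, at the pair `(v, u)`
  have polar := h (v + u) u y
  simp only [map_add, LinearMap.add_apply] at polar
  simp only [LinearMap.smul_apply, smul_eq_mul]
  linear_combination polar - h v u y - h u u y - A v u * hBu y + A u y * hBvu v - A v y * hcu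

theorem not_linearIndependent_of_forall_not_linearIndependent_apply [Invertible (2 : K)]
    {A B : LinearMap.BilinForm K V} (hA : A.IsSymm) (hB : B.IsSymm)
    (h : ∀ v, ¬LinearIndependent K ![A v, B v]) : ¬LinearIndependent K ![A, B] := by
  intro hAB
  have hA0 : A ≠ 0 := by simpa using hAB.ne_zero 0
  obtain ⟨u, hu⟩ := exists_bilinForm_self_ne_zero hA0 (isSymm_iff.mp hA)
  obtain ⟨c, hc⟩ := exists_eq_smul_of_mul_apply_comm hA hB
    (fun v => mul_apply_comm_of_not_linearIndependent (h v)) hu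
  exact (LinearIndependent.pair_iff' (V := LinearMap.BilinForm K V) hA0).mp hAB c hc.symm

end LinearMap.BilinForm

end

theorem oort_keel_sadun_prop_4_4_general {V : Type*} [AddCommGroup V] [Module ℂ V]
    (i : ℕ) (hi : i = 1 ∨ i = 2) :
    ¬ ∃ Y : Submodule ℂ (V →ₗ[ℂ] Module.Dual ℂ V),
        (∀ M ∈ Y, ∀ x y : V, M x y = M y x) ∧
        Module.finrank ℂ Y = i ∧
        ∀ v : V, v ≠ 0 →
          ¬ Function.Injective fun N : Y => (N : V →ₗ[ℂ] Module.Dual ℂ V) v := by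
  rintro ⟨Y, hsym, hrank, hviol⟩
  have : Free ℂ Y := Free.of_divisionRing ℂ Y
  have : Module.Finite ℂ Y := finite_of_finrank_pos (by omega)
  obtain ⟨b⟩ : Nonempty (Basis (Fin i) ℂ Y) := ⟨finBasisOfFinrankEq ℂ Y hrank⟩
  have hdep : ∀ v, ¬LinearIndependent ℂ fun j => (b j : V →ₗ[ℂ] Dual ℂ V) v := by
    intro v
    by_cases hv : v = 0
    · exact fun hli => hli.ne_zero ⟨0, by omega⟩ (by simp [hv])
    · exact (b.injective_iff_linearIndependent_comp ((LinearMap.applyₗ v).comp Y.subtype)).not.mp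
        (hviol v hv)
  rcases hi with rfl | rfl
  · refine b.ne_zero 0 (Subtype.ext (LinearMap.ext fun v => ?_))
    simpa [linearIndependent_unique_iff] using hdep v
  · refine LinearMap.BilinForm.not_linearIndependent_of_forall_not_linearIndependent_apply
      ⟨hsym _ (b 0).2⟩ ⟨hsym _ (b 1).2⟩ (fun v => ?_) ?_
    · have := hdep v
      rwa [← FinVec.etaExpand_eq (fun j => _)] at this
    · have := b.linearIndependent.map_injOn Y.subtype Y.injective_subtype.injOn
      rwa [← FinVec.etaExpand_eq (_ ∘ _)] at this

/-- **Proposition 4.4.** Let `V` be a finite-dimensional complex vector space and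
`i ∈ {1, 2}`. There is no `i`-dimensional linear subspace `Y ⊆ S(V,V*)` such that for
every nonzero `v ∈ V` the evaluation map `e_v : Y → V*` fails to be injective. -/
theorem oort_keel_sadun_prop_4_4 {V : Type*} [AddCommGroup V] [Module ℂ V]
    [FiniteDimensional ℂ V] (i : ℕ) (hi : i = 1 ∨ i = 2) :
    ¬ ∃ Y : Submodule ℂ (V →ₗ[ℂ] Module.Dual ℂ V),
        (∀ M ∈ Y, ∀ x y : V, M x y = M y x) ∧
        Module.finrank ℂ Y = i ∧
        ∀ v : V, v ≠ 0 →
          ¬ Function.Injective fun N : Y => (N : V →ₗ[ℂ] Module.Dual ℂ V) v :=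
  oort_keel_sadun_prop_4_4_general i hi
end

section
/- Let r ≥ 1 and s ≥ 0 be integers. Every homomorphism of real Lie algebras from sp(2r, ℝ) to u(s) is identically zero, where sp(2r, ℝ) is the real Lie algebra of 2r × 2r real matrices X satisfying Xᵗ J + J X = 0 for the standard symplectic matrix J, and u(s) is the real Lie algebra of skew-Hermitian s × s complex matrices. -/
open Matrix

attribute [local instance 100] LieRing.ofAssociativeRing

/-- The standard symplectic matrix `J = [[0, I_r], [−I_r, 0]]`, with rows and columns
indexed by `Fin r ⊕ Fin r`. -/
noncomputable def stdSympJ (r : ℕ) : Matrix (Fin r ⊕ Fin r) (Fin r ⊕ Fin r) ℝ :=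
  Matrix.fromBlocks 0 1 (-1) 0

/-- The real symplectic Lie algebra `sp(2r, ℝ)`: real `2r × 2r` matrices `X` with
`Xᵀ J + J X = 0`, where `J` is the standard symplectic matrix. -/
noncomputable def spLie (r : ℕ) :
    LieSubalgebra ℝ (Matrix (Fin r ⊕ Fin r) (Fin r ⊕ Fin r) ℝ) where
  carrier := {X | Xᵀ * stdSympJ r + stdSympJ r * X = 0}
  add_mem' := fun {a b} ha hb => by
    simp only [Set.mem_setOf_eq] at *
    rw [Matrix.transpose_add, Matrix.add_mul, Matrix.mul_add,
      show aᵀ * stdSympJ r + bᵀ * stdSympJ r + (stdSympJ r * a + stdSympJ r * b) =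
        (aᵀ * stdSympJ r + stdSympJ r * a) + (bᵀ * stdSympJ r + stdSympJ r * b) by abel,
      ha, hb, add_zero]
  zero_mem' := by
    simp only [Set.mem_setOf_eq, Matrix.transpose_zero, Matrix.zero_mul, Matrix.mul_zero,
      add_zero]
  smul_mem' := fun c a ha => by
    simp only [Set.mem_setOf_eq] at *
    rw [Matrix.transpose_smul, Matrix.smul_mul, Matrix.mul_smul, ← smul_add, ha, smul_zero]
  lie_mem' := fun {x y} hx hy => by
    simp only [Set.mem_setOf_eq] at *
    have hx' : xᵀ * stdSympJ r = -(stdSympJ r * x) := eq_neg_of_add_eq_zero_left hx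
    have hy' : yᵀ * stdSympJ r = -(stdSympJ r * y) := eq_neg_of_add_eq_zero_left hy
    rw [Ring.lie_def, Matrix.transpose_sub, Matrix.transpose_mul, Matrix.transpose_mul,
      Matrix.sub_mul, Matrix.mul_sub, Matrix.mul_assoc yᵀ xᵀ (stdSympJ r),
      Matrix.mul_assoc xᵀ yᵀ (stdSympJ r), hx', hy', Matrix.mul_neg, Matrix.mul_neg,
      ← Matrix.mul_assoc yᵀ (stdSympJ r) x, ← Matrix.mul_assoc xᵀ (stdSympJ r) y,
      hx', hy', Matrix.neg_mul, Matrix.neg_mul, neg_neg, neg_neg,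
      Matrix.mul_assoc, Matrix.mul_assoc]
    abel

/-- The real Lie algebra `u(s)` of skew-Hermitian `s × s` complex matrices. -/
noncomputable def uLie (s : ℕ) : LieSubalgebra ℝ (Matrix (Fin s) (Fin s) ℂ) where
  carrier := {A | Aᴴ = -A}
  add_mem' := fun {a b} ha hb => by
    simp only [Set.mem_setOf_eq] at *
    rw [Matrix.conjTranspose_add, ha, hb, neg_add]
  zero_mem' := by simp
  smul_mem' := fun c a ha => by
    simp only [Set.mem_setOf_eq] at *
    rw [Matrix.conjTranspose_smul, ha, smul_neg, star_trivial]
  lie_mem' := fun {x y} hx hy => by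
    simp only [Set.mem_setOf_eq] at *
    rw [Ring.lie_def, Matrix.conjTranspose_sub, Matrix.conjTranspose_mul,
      Matrix.conjTranspose_mul, hx, hy, Matrix.neg_mul, Matrix.mul_neg, neg_neg,
      Matrix.neg_mul, Matrix.mul_neg, neg_neg, neg_sub]

/-!
The element `H = diag(I, -I)` of `sp(2r, ℝ)` acts by `ad H` with eigenvalue `2` on the upper
off-diagonal block `[[0, B], [0, 0]]` and `-2` on the lower one `[[0, 0], [C, 0]]`. The Lie algebra
`u(s)` has no such eigenvectors: if `[h, x] = c x` with `c ≠ 0`, then `c tr(x²) = tr([h, x] x) = 0`,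
and for skew-Hermitian `x` the number `-tr(x²) = tr(xᴴ x)` vanishes only at `x = 0`. Hence a Lie
homomorphism `sp(2r, ℝ) → u(s)` kills both off-diagonal blocks and therefore their brackets
`diag(BC, -(BC)ᵀ)` for symmetric `B`, `C`, and these span the block-diagonal part.
-/

section SkewHermitian

open scoped ComplexOrder

variable {n 𝕜 : Type*} [Fintype n] [RCLike 𝕜]

theorem Matrix.eq_zero_of_mul_sub_mul_eq_smul_of_conjTranspose_eq_neg {h x : Matrix n n 𝕜}
    (hx : xᴴ = -x) {c : ℝ} (hc : c ≠ 0) (hhx : h * x - x * h = c • x) : x = 0 := by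
  have htrace : c • trace (x * x) = 0 := by
    rw [← trace_smul, ← Matrix.smul_mul, ← hhx, Matrix.sub_mul, trace_sub, Matrix.mul_assoc x,
      trace_mul_comm x (h * x), sub_self]
  have hsq : trace (x * x) = 0 := (smul_eq_zero.1 htrace).resolve_left hc
  rw [← trace_conjTranspose_mul_self_eq_zero_iff, hx, Matrix.neg_mul, trace_neg, hsq, neg_zero]

end SkewHermitian

theorem uLie.lieHom_eq_zero_of_lie_eq_smul {L : Type*} [LieRing L] [LieAlgebra ℝ L]
    {s : ℕ} (φ : L →ₗ⁅ℝ⁆ uLie s) {H X : L} {c : ℝ} (hc : c ≠ 0) (hHX : ⁅H, X⁆ = c • X) :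
    φ X = 0 := by
  have hφ : ⁅φ H, φ X⁆ = c • φ X := by rw [← LieHom.map_lie, hHX, map_smul]
  exact Subtype.ext <| eq_zero_of_mul_sub_mul_eq_smul_of_conjTranspose_eq_neg (φ X).2 hc
    (by simpa [Ring.lie_def] using congrArg Subtype.val hφ)

namespace spLie

variable {r : ℕ}

theorem fromBlocks_mem_iff {A B C D : Matrix (Fin r) (Fin r) ℝ} :
    fromBlocks A B C D ∈ spLie r ↔ Bᵀ = B ∧ Cᵀ = C ∧ D = -Aᵀ := by
  change _ᵀ * stdSympJ r + stdSympJ r * _ = 0 ↔ _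
  rw [stdSympJ, fromBlocks_transpose, fromBlocks_multiply, fromBlocks_multiply, fromBlocks_add,
    ← fromBlocks_zero, fromBlocks_inj]
  simp only [Matrix.mul_zero, Matrix.mul_one, Matrix.mul_neg, Matrix.zero_mul, Matrix.one_mul,
    Matrix.neg_mul, zero_add, add_zero]
  constructor
  · rintro ⟨hC, hAD, -, hB⟩
    exact ⟨sub_eq_zero.1 (by simpa [add_comm, sub_eq_add_neg] using hB),
      neg_add_eq_zero.1 hC, eq_neg_of_add_eq_zero_right hAD⟩
  · rintro ⟨hB, hC, rfl⟩
    simp [hB, hC]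

noncomputable def gradingElement (r : ℕ) : spLie r :=
  ⟨fromBlocks 1 0 0 (-1), fromBlocks_mem_iff.2 (by simp)⟩

noncomputable def upper (B : Matrix (Fin r) (Fin r) ℝ) (hB : Bᵀ = B) : spLie r :=
  ⟨fromBlocks 0 B 0 0, fromBlocks_mem_iff.2 (by simp [hB])⟩

noncomputable def lower (C : Matrix (Fin r) (Fin r) ℝ) (hC : Cᵀ = C) : spLie r :=
  ⟨fromBlocks 0 0 C 0, fromBlocks_mem_iff.2 (by simp [hC])⟩

noncomputable def ofGl (r : ℕ) : Matrix (Fin r) (Fin r) ℝ →+ spLie r :=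
  AddMonoidHom.mk' (fun A ↦ ⟨fromBlocks A 0 0 (-Aᵀ), fromBlocks_mem_iff.2 (by simp)⟩)
    fun A B ↦ Subtype.ext <| by
      simp only [AddMemClass.coe_add, fromBlocks_add, add_zero, transpose_add, neg_add]

theorem lie_gradingElement_upper (B : Matrix (Fin r) (Fin r) ℝ) (hB : Bᵀ = B) :
    ⁅gradingElement r, upper B hB⁆ = (2 : ℝ) • upper B hB := by
  ext1
  change fromBlocks 1 0 0 (-1) * fromBlocks 0 B 0 0 - fromBlocks 0 B 0 0 * fromBlocks 1 0 0 (-1) =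
    (2 : ℝ) • fromBlocks 0 B 0 0
  simp [fromBlocks_multiply, sub_eq_add_neg, fromBlocks_neg, fromBlocks_add, two_smul]

theorem lie_gradingElement_lower (C : Matrix (Fin r) (Fin r) ℝ) (hC : Cᵀ = C) :
    ⁅gradingElement r, lower C hC⁆ = (-2 : ℝ) • lower C hC := by
  ext1
  change fromBlocks 1 0 0 (-1) * fromBlocks 0 0 C 0 - fromBlocks 0 0 C 0 * fromBlocks 1 0 0 (-1) =
    (-2 : ℝ) • fromBlocks 0 0 C 0
  simp [fromBlocks_multiply, sub_eq_add_neg, fromBlocks_neg, fromBlocks_add, two_smul]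

theorem lie_upper_lower (B C : Matrix (Fin r) (Fin r) ℝ) (hB : Bᵀ = B) (hC : Cᵀ = C) :
    ⁅upper B hB, lower C hC⁆ = ofGl r (B * C) := by
  ext1
  change fromBlocks 0 B 0 0 * fromBlocks 0 0 C 0 - fromBlocks 0 0 C 0 * fromBlocks 0 B 0 0 =
    fromBlocks (B * C) 0 0 (-(B * C)ᵀ)
  simp [fromBlocks_multiply, sub_eq_add_neg, fromBlocks_neg, fromBlocks_add, transpose_mul, hB, hC]

theorem exists_eq_ofGl_add_upper_add_lower (X : spLie r) :
    ∃ A B C hB hC, X = ofGl r A + upper B hB + lower C hC := by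
  obtain ⟨hB, hC, hD⟩ := fromBlocks_mem_iff.1 ((fromBlocks_toBlocks X.1).symm ▸ X.2)
  refine ⟨X.1.toBlocks₁₁, _, _, hB, hC, Subtype.ext ?_⟩
  change X.1 = fromBlocks _ 0 0 _ + fromBlocks 0 _ 0 0 + fromBlocks 0 0 _ 0
  conv_lhs => rw [← fromBlocks_toBlocks X.1]
  simp [fromBlocks_add, hD]

variable {s : ℕ} (φ : spLie r →ₗ⁅ℝ⁆ uLie s)

theorem lieHom_upper_eq_zero (B : Matrix (Fin r) (Fin r) ℝ) (hB : Bᵀ = B) : φ (upper B hB) = 0 :=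
  uLie.lieHom_eq_zero_of_lie_eq_smul φ two_ne_zero (lie_gradingElement_upper B hB)

theorem lieHom_lower_eq_zero (C : Matrix (Fin r) (Fin r) ℝ) (hC : Cᵀ = C) : φ (lower C hC) = 0 :=
  uLie.lieHom_eq_zero_of_lie_eq_smul φ (neg_ne_zero.2 two_ne_zero) (lie_gradingElement_lower C hC)

theorem lieHom_ofGl_eq_zero (A : Matrix (Fin r) (Fin r) ℝ) : φ (ofGl r A) = 0 := by
  have hprod : ∀ B C (hB : Bᵀ = B) (hC : Cᵀ = C), φ (ofGl r (B * C)) = 0 := fun B C hB hC ↦ by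
    rw [← lie_upper_lower B C hB hC, LieHom.map_lie, lieHom_upper_eq_zero, zero_lie]
  induction A using Matrix.induction_on' with
  | h_zero => rw [map_zero, map_zero]
  | h_add A B hA hB => rw [map_add, map_add, hA, hB, add_zero]
  | h_std_basis i j x =>
    obtain rfl | hij := eq_or_ne i j
    -- `single i j x` is a product of symmetric matrices: `single i i 1 * single i i x`, and
    -- `single i i 1 * (single i j x + single j i x)` for `i ≠ j`
    · simpa [single_mul_single_same] using
        hprod (single i i 1) (single i i x) (transpose_single ..) (transpose_single ..)
    · simpa [Matrix.mul_add, single_mul_single_same, hij] using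
        hprod (single i i 1) (single i j x + single j i x) (transpose_single ..)
          (by rw [transpose_add, transpose_single, transpose_single, add_comm])

end spLie

theorem sp_to_u_lieHom_eq_zero_general (r s : ℕ)
    (φ : spLie r →ₗ⁅ℝ⁆ uLie s) : ∀ X, φ X = 0 := by
  intro X
  obtain ⟨A, B, C, hB, hC, rfl⟩ := spLie.exists_eq_ofGl_add_upper_add_lower X
  rw [map_add, map_add, spLie.lieHom_ofGl_eq_zero, spLie.lieHom_upper_eq_zero,
    spLie.lieHom_lower_eq_zero, add_zero, add_zero]

/-- Every homomorphism of real Lie algebras from `sp(2r, ℝ)` to `u(s)` is identically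
zero (`r ≥ 1`, `s ≥ 0`). -/
theorem sp_to_u_lieHom_eq_zero (r s : ℕ) (hr : 1 ≤ r)
    (φ : spLie r →ₗ⁅ℝ⁆ uLie s) : ∀ X, φ X = 0 :=
  sp_to_u_lieHom_eq_zero_general r s φ
end

section
/- Let n ≥ 0 and let V ⊆ ℂⁿ be a complex linear subspace such that σ(V) = V for every field automorphism σ of ℂ, where σ acts on ℂⁿ coordinatewise. Then V is spanned over ℂ by V ∩ ℚⁿ; equivalently, V is the extension of scalars to ℂ of a ℚ-linear subspace of ℚⁿ. -/
/-!
The fixed field of `Aut(ℂ)` is `ℚ`: a non-rational `x` has a different image under some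
`ℚ`-embedding of `ℚ(x)` into `ℂ` (a different root of its minimal polynomial, or `x + 1` if `x`
is transcendental), and every embedding of a countable subfield of `ℂ` extends to an automorphism
of `ℂ`, since both sides have transcendence bases of cardinality `#ℂ`.

For the subspace, let `z ∈ V` be a nonzero vector of minimal support, scaled so that `z i = 1`.
Then `σ z - z ∈ V` has strictly smaller support, so `σ z = z` for all `σ`, and `z` is rational.
Subtracting `v i • z` from `v ∈ V` shrinks the support of `v`, and induction on the support
concludes.
-/

open Cardinal Function IntermediateField

universe u

namespace IsAlgClosed

theorem nonempty_algEquiv_of_isTranscendenceBasis {R K L ι κ : Type*} [CommRing R] [Field K]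
    [Field L] [IsAlgClosed K] [IsAlgClosed L] [Algebra R K] [Algebra R L]
    {v : ι → K} {w : κ → L} (e : ι ≃ κ) (hv : IsTranscendenceBasis R v)
    (hw : IsTranscendenceBasis R w) : Nonempty (K ≃ₐ[R] L) := by
  have := isAlgClosure_of_transcendence_basis v hv
  have := isAlgClosure_of_transcendence_basis w hw
  let E : Algebra.adjoin R (Set.range v) ≃ₐ[R] Algebra.adjoin R (Set.range w) :=
    hv.1.aevalEquiv.symm.trans ((MvPolynomial.renameEquiv R e).trans hw.1.aevalEquiv)
  refine ⟨AlgEquiv.ofRingEquiv (f := IsAlgClosure.equivOfEquiv K L E.toRingEquiv) fun r => ?_⟩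
  rw [IsScalarTower.algebraMap_apply R (Algebra.adjoin R (Set.range v)) K,
    IsAlgClosure.equivOfEquiv_algebraMap, AlgEquiv.coe_ringEquiv, AlgEquiv.commutes,
    ← IsScalarTower.algebraMap_apply]

variable {R K L : Type u} [Field R] [Countable R] [Field K] [Field L] [IsAlgClosed K]
  [IsAlgClosed L]

theorem nonempty_algEquiv_of_countable [Algebra R K] [Algebra R L]
    (hK : ℵ₀ < #K) (hKL : #K = #L) : Nonempty (K ≃ₐ[R] L) := by
  obtain ⟨s, hs⟩ := exists_isTranscendenceBasis R K
  obtain ⟨t, ht⟩ := exists_isTranscendenceBasis R L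
  have hR : #R ≤ ℵ₀ := mk_le_aleph0
  obtain ⟨e⟩ : Nonempty (s ≃ t) := Cardinal.eq.1 <| by
    rw [← cardinal_eq_cardinal_transcendence_basis_of_aleph0_lt' _ hs hR hK,
      ← cardinal_eq_cardinal_transcendence_basis_of_aleph0_lt' _ ht hR (hKL ▸ hK), hKL]
  exact nonempty_algEquiv_of_isTranscendenceBasis e hs ht

theorem exists_ringEquiv_apply_eq (hK : ℵ₀ < #K) (hKL : #K = #L) (f : R →+* K) (g : R →+* L) :
    ∃ σ : K ≃+* L, ∀ a, σ (f a) = g a := by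
  let _ := f.toAlgebra
  let _ := g.toAlgebra
  obtain ⟨σ⟩ := nonempty_algEquiv_of_countable (R := R) hK hKL
  exact ⟨σ, σ.commutes⟩

end IsAlgClosed

theorem IntermediateField.exists_algHom_adjoin_gen_ne {F L : Type*} [Field F] [PerfectField F]
    [Field L] [Algebra F L] [IsAlgClosed L] {x : L} (hx : x ∉ (algebraMap F L).range) :
    ∃ ψ : F⟮x⟯ →ₐ[F] L, ψ (AdjoinSimple.gen F x) ≠ x := by
  by_cases halg : IsAlgebraic F x
  · have hint := halg.isIntegral
    by_contra! hfix
    have : Subsingleton (F⟮x⟯ →ₐ[F] L) := ⟨fun ψ₁ ψ₂ => adjoin_algHom_ext F fun y hy => by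
      obtain rfl : y = x := hy
      exact (hfix ψ₁).trans (hfix ψ₂).symm⟩
    have hcard := card_algHom_adjoin_integral F (K := L) hint
      (PerfectField.separable_of_irreducible (minpoly.irreducible hint)) (IsAlgClosed.splits _)
    rw [Nat.card_of_subsingleton (F⟮x⟯).val] at hcard
    have hdeg := (minpoly.two_le_natDegree_iff hint).2 hx
    omega
  · have htr : Transcendental F x := halg
    have htr1 : Transcendental F (x + 1) := fun h =>
      halg (by simpa using (h.isIntegral.sub isIntegral_one).isAlgebraic)
    refine ⟨(F⟮x + 1⟯).val.comp ((RatFunc.algEquivOfTranscendental _ htr1 : RatFunc F →ₐ[F] _).comp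
      (RatFunc.algEquivOfTranscendental x htr).symm), ?_⟩
    simp

namespace IsAlgClosed

variable {K : Type u} [Field K] [IsAlgClosed K] [CharZero K]

theorem exists_ringEquiv_apply_ne (hK : ℵ₀ < #K) {x : K} (hx : ∀ q : ℚ, x ≠ q) :
    ∃ σ : K ≃+* K, σ x ≠ x := by
  obtain ⟨ψ, hψ⟩ := exists_algHom_adjoin_gen_ne (F := ℚ) (x := x) (by
    rintro ⟨q, rfl⟩
    exact hx q (eq_ratCast _ q))
  have : Countable ℚ⟮x⟯ := by
    rw [← mk_le_aleph0_iff, ← lift_le_aleph0]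
    refine (lift_cardinalMk_adjoin_le ℚ ({x} : Set K)).trans ?_
    simp
  obtain ⟨σ, hσ⟩ := exists_ringEquiv_apply_eq hK rfl (algebraMap ℚ⟮x⟯ K) ψ.toRingHom
  refine ⟨σ, fun hσx => hψ ?_⟩
  calc ψ (AdjoinSimple.gen ℚ x) = σ (algebraMap ℚ⟮x⟯ K (AdjoinSimple.gen ℚ x)) := (hσ _).symm
    _ = x := by rw [AdjoinSimple.algebraMap_gen, hσx]

theorem forall_ringEquiv_apply_eq_iff (hK : ℵ₀ < #K) {x : K} :
    (∀ σ : K ≃+* K, σ x = x) ↔ ∃ q : ℚ, x = q := by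
  refine ⟨fun h => ?_, fun ⟨q, hq⟩ σ => by rw [hq, map_ratCast]⟩
  by_contra! hx
  obtain ⟨σ, hσ⟩ := exists_ringEquiv_apply_ne hK hx
  exact hσ (h σ)

end IsAlgClosed

theorem Function.support_sub_ssubset {ι M : Type*} [AddGroup M] {a b : ι → M} {s : Set ι} {i : ι}
    (ha : support a ⊆ s) (hb : support b ⊆ s) (hi : i ∈ s) (hab : a i = b i) :
    support (a - b) ⊂ s := by
  refine ((support_sub a b).trans (Set.union_subset ha hb)).ssubset_of_mem_notMem hi ?_
  simp [hab]

namespace Submodule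

variable {K ι : Type*} [Field K] (V : Submodule K (ι → K))

def nonzeroSupports : Set (Set ι) := {s | ∃ w ∈ V, w ≠ 0 ∧ support w = s}

variable {V}

theorem exists_apply_eq_one_minimal_support [Finite ι] {v : ι → K} (hv : v ∈ V) (hv0 : v ≠ 0) :
    ∃ z ∈ V, ∃ i, z i = 1 ∧ support z ⊆ support v ∧
      Minimal (· ∈ V.nonzeroSupports) (support z) := by
  obtain ⟨s, hsv, hmin⟩ := exists_minimal_le_of_wellFoundedLT (· ∈ V.nonzeroSupports) _
    ⟨v, hv, hv0, rfl⟩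
  obtain ⟨u, huV, hu0, rfl⟩ := hmin.prop
  obtain ⟨i, hi⟩ := Function.ne_iff.1 hu0
  refine ⟨(u i)⁻¹ • u, V.smul_mem _ huV, i, inv_mul_cancel₀ hi, ?_⟩
  rw [support_const_smul_of_ne_zero _ _ (inv_ne_zero hi)]
  exact ⟨hsv, hmin⟩

variable {G : Type*} [FunLike G K K] [RingHomClass G K K]

theorem map_eq_of_minimal_support (hV : ∀ σ : G, ∀ v ∈ V, (fun i => σ (v i)) ∈ V)
    {z : ι → K} {i : ι} (hz : z ∈ V) (hzi : z i = 1)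
    (hmin : Minimal (· ∈ V.nonzeroSupports) (support z)) (σ : G) :
    (fun j => σ (z j)) = z := by
  have hsupp : support (fun j => σ (z j)) = support z :=
    support_comp_eq σ (fun {_} => map_eq_zero σ) z
  by_contra hne
  have hi : i ∈ support z := by simp [hzi]
  exact hmin.not_prop_of_lt (support_sub_ssubset (i := i) hsupp.le le_rfl hi (by simp [hzi]))
    ⟨_, V.sub_mem (hV σ z hz) hz, sub_ne_zero.2 hne, rfl⟩

theorem eq_span_fixed_vectors [Finite ι] (hV : ∀ σ : G, ∀ v ∈ V, (fun i => σ (v i)) ∈ V) :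
    V = span K {v | v ∈ V ∧ ∀ i, ∀ σ : G, σ (v i) = v i} := by
  refine le_antisymm (fun v hv => ?_) (span_le.2 fun v hv => hv.1)
  induction hs : support v using WellFoundedLT.induction generalizing v with
  | ind s ih =>
  obtain rfl | hv0 := eq_or_ne v 0
  · exact zero_mem _
  obtain ⟨z, hz, i, hzi, hzv, hmin⟩ := exists_apply_eq_one_minimal_support hv hv0
  have hzW : z ∈ span K {v | v ∈ V ∧ ∀ i, ∀ σ : G, σ (v i) = v i} :=
    subset_span ⟨hz, fun j σ => congrFun (map_eq_of_minimal_support hV hz hzi hmin σ) j⟩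
  have hi : i ∈ support v := hzv (by simp [hzi])
  have hlt : support (v - v i • z) ⊂ s := hs ▸ support_sub_ssubset (b := v i • z) subset_rfl
    ((support_const_smul_subset _ _).trans hzv) hi (by simp [hzi])
  have hrest := ih _ hlt _ (V.sub_mem hv (V.smul_mem (v i) hz)) rfl
  simpa using add_mem hrest (smul_mem _ (v i) hzW)

end Submodule

/-- Let `V ⊆ ℂⁿ` be a complex linear subspace with `σ(V) = V` for every field
automorphism `σ` of `ℂ` (acting coordinatewise). Then `V` is spanned over `ℂ` by
`V ∩ ℚⁿ`, the set of vectors of `V` with rational coordinates. -/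
theorem galois_stable_subspace_rational_span (n : ℕ)
    (V : Submodule ℂ (Fin n → ℂ))
    (hV : ∀ σ : ℂ ≃+* ℂ, (fun v : Fin n → ℂ => fun i => σ (v i)) '' (V : Set (Fin n → ℂ))
      = (V : Set (Fin n → ℂ))) :
    V = Submodule.span ℂ {v : Fin n → ℂ | v ∈ V ∧ ∀ i, ∃ q : ℚ, v i = (q : ℂ)} := by
  have hstable : ∀ σ : ℂ ≃+* ℂ, ∀ v ∈ V, (fun i => σ (v i)) ∈ V := fun σ v hv => by
    rw [← SetLike.mem_coe, ← hV σ]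
    exact Set.mem_image_of_mem _ hv
  have hℂ : ℵ₀ < #ℂ := by rw [mk_complex]; exact aleph0_lt_continuum
  conv_lhs => rw [V.eq_span_fixed_vectors hstable]
  simp_rw [IsAlgClosed.forall_ringEquiv_apply_eq_iff hℂ]
end
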